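/- Let n ≥ 3 be an odd integer and q > 0 a real number. The vector ẽ^q_1 = Σ_{(X′,X″)∈Ω_1} (−q)^{I_1(X′)} e_{X′} ⊗ e_{X″} ∈ S ⊗ S satisfies (X_i ⊗ K_i^{−1/2} + K_i^{1/2} ⊗ X_i)(ẽ^q_1) = 0 for every i ∈ {1,…,n}; that is, ẽ^q_1 is a highest weight vector of weight L_1 for the action of U_q(so_{2n}) on U₊ ⊗ U₊. -/

import Mathlib

open scoped TensorProduct Classical

noncomputable section

/-- Subsets of `{1,…,n}`, the index set for the basis of the spinor space `S`. -/
abbrev SIdx (n : ℕ) : Type := {X : Finset ℕ // X ∈ (Finset.Icc 1 n).powerset}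

/-- The spinor space `S`, with basis `(e_X)` indexed by subsets of `{1,…,n}`. -/
abbrev Sp (n : ℕ) : Type := SIdx n → ℂ

/-- The basis vector `e_X`. -/
def eB (n : ℕ) (X : SIdx n) : Sp n := Pi.single X 1

/-- `I₁(X) = Σ_{k∈X} k − |X|·n`. -/
def I1 (n : ℕ) (X : Finset ℕ) : ℤ := (∑ k ∈ X, (k : ℤ)) - X.card * n

/-- `I_i(X) = I₁(X) + |{k ∈ X : k < i}| − (i−1)`. -/
def Ilow (n i : ℕ) (X : Finset ℕ) : ℤ :=
  I1 n X + ((X.filter (fun k => k < i)).card : ℤ) - ((i : ℤ) - 1)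

/-- `I_{n+i}(X) = I₁(X) + |{k ∈ X : k < i}| − (n−1)`. -/
def Ihigh (n i : ℕ) (X : Finset ℕ) : ℤ :=
  I1 n X + ((X.filter (fun k => k < i)).card : ℤ) - ((n : ℤ) - 1)

def eraseIdx (n : ℕ) (X : SIdx n) (i : ℕ) : SIdx n :=
  ⟨(X : Finset ℕ).erase i,
    Finset.mem_powerset.2 ((Finset.erase_subset _ _).trans (Finset.mem_powerset.1 X.2))⟩

def insertIdx (n : ℕ) (X : SIdx n) (i : ℕ) (h : i ∈ Finset.Icc 1 n) : SIdx n :=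
  ⟨insert i (X : Finset ℕ),
    Finset.mem_powerset.2 (Finset.insert_subset h (Finset.mem_powerset.1 X.2))⟩

/-- The creation operator `a_i†`: `a_i† e_X = (−1)^{|{k ∈ X : k < i}|} e_{X∪{i}}` if `i ∉ X`,
and `a_i† e_X = 0` otherwise. -/
def adag (n i : ℕ) : Sp n →ₗ[ℂ] Sp n where
  toFun f := fun X =>
    if i ∈ (X : Finset ℕ) then
      ((-1 : ℂ) ^ ((((X : Finset ℕ).erase i).filter (fun k => k < i)).card)) *
        f (eraseIdx n X i)
    else 0
  map_add' f g := by
    funext X; by_cases h : i ∈ (X : Finset ℕ) <;> simp [h] <;> ring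
  map_smul' a f := by
    funext X; by_cases h : i ∈ (X : Finset ℕ) <;> simp [h] <;> ring

/-- The annihilation operator `a_i`: `a_i e_X = (−1)^{|{k ∈ X : k < i}|} e_{X∖{i}}` if `i ∈ X`,
and `a_i e_X = 0` otherwise. -/
def aop (n i : ℕ) : Sp n →ₗ[ℂ] Sp n where
  toFun f := fun X =>
    if h : i ∈ Finset.Icc 1 n ∧ i ∉ (X : Finset ℕ) then
      ((-1 : ℂ) ^ (((insert i (X : Finset ℕ)).filter (fun k => k < i)).card)) *
        f (insertIdx n X i h.1)
    else 0
  map_add' f g := by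
    funext X
    by_cases h : i ∈ Finset.Icc 1 n ∧ i ∉ (X : Finset ℕ)
    · simp only [dif_pos h, Pi.add_apply, mul_add]
    · simp only [dif_neg h, Pi.add_apply, add_zero]
  map_smul' a f := by
    funext X
    by_cases h : i ∈ Finset.Icc 1 n ∧ i ∉ (X : Finset ℕ)
    · simp only [dif_pos h, Pi.smul_apply, smul_eq_mul, RingHom.id_apply]
      ring
    · simp only [dif_neg h, Pi.smul_apply, smul_eq_mul, RingHom.id_apply, mul_zero]

/-- The raising Chevalley generator: `X_i = −a_{i+1} a_i†` for `1 ≤ i ≤ n−1` and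
`X_n = a_n† a_{n−1}†`. -/
def Xop (n i : ℕ) : Sp n →ₗ[ℂ] Sp n :=
  if i = n then (adag n n).comp (adag n (n - 1))
  else -((aop n (i + 1)).comp (adag n i))

/-- The lowering Chevalley generator: `Y_i = −a_i a_{i+1}†` for `1 ≤ i ≤ n−1` and
`Y_n = a_n a_{n−1}`. -/
def Yop (n i : ℕ) : Sp n →ₗ[ℂ] Sp n :=
  if i = n then (aop n n).comp (aop n (n - 1))
  else -((aop n i).comp (adag n (i + 1)))

/-- `ẽ_i = Σ_{(X′,X″)∈Ω_i} σ_i(X′) e_{X′} ⊗ e_{X″}`, where `Ω_i` consists of pairs with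
`X′ ∪ X″ = {1,…,n}`, `X′ ∩ X″ = {i}`, `|X′|` odd, and `σ_i(X) = (−1)^{I_i(X)}`. -/
def eTlow (n i : ℕ) : Sp n ⊗[ℂ] Sp n :=
  ∑ p ∈ Finset.univ.filter (fun p : SIdx n × SIdx n =>
      (p.1 : Finset ℕ) ∪ (p.2 : Finset ℕ) = Finset.Icc 1 n ∧
      (p.1 : Finset ℕ) ∩ (p.2 : Finset ℕ) = {i} ∧ Odd (p.1 : Finset ℕ).card),
    ((-1 : ℂ) ^ (Ilow n i (p.1 : Finset ℕ))) • (eB n p.1 ⊗ₜ[ℂ] eB n p.2)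

/-- `ẽ_{n+i} = (−1)^i Σ_{(X′,X″)∈Ω_{n+i}} σ_{n+i}(X′) e_{X′} ⊗ e_{X″}`, where `Ω_{n+i}`
consists of pairs of disjoint sets with `X′ ∪ X″ = {1,…,n} ∖ {i}` and `|X′|` odd, and
`σ_{n+i}(X) = (−1)^{I_{n+i}(X)}`. -/
def eThigh (n i : ℕ) : Sp n ⊗[ℂ] Sp n :=
  ((-1 : ℂ) ^ i) •
    ∑ p ∈ Finset.univ.filter (fun p : SIdx n × SIdx n =>
        (p.1 : Finset ℕ) ∪ (p.2 : Finset ℕ) = (Finset.Icc 1 n) \ {i} ∧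
        Disjoint (p.1 : Finset ℕ) (p.2 : Finset ℕ) ∧ Odd (p.1 : Finset ℕ).card),
      ((-1 : ℂ) ^ (Ihigh n i (p.1 : Finset ℕ))) • (eB n p.1 ⊗ₜ[ℂ] eB n p.2)

/-- The vector representation `V = ℂ^{2n}`; the coordinate `x` corresponds to the basis
vector `u_{x+1}` (1-based indexing). -/
abbrev Vsp (n : ℕ) : Type := Fin (2 * n) → ℂ

/-- The basis vector `u_j` of `V` (1-based). -/
def uB (n j : ℕ) : Vsp n := fun x => if (x : ℕ) + 1 = j then 1 else 0

/-- The `l`-th coordinate functional on `V` (1-based). -/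
def coordL (n l : ℕ) : Vsp n →ₗ[ℂ] ℂ where
  toFun f := ∑ x : Fin (2 * n), (if (x : ℕ) + 1 = l then 1 else 0) * f x
  map_add' f g := by simp [mul_add, Finset.sum_add_distrib]
  map_smul' a f := by
    simp only [Pi.smul_apply, smul_eq_mul, RingHom.id_apply, Finset.mul_sum]
    exact Finset.sum_congr rfl fun x _ => by ring

/-- The matrix unit `E_{kl}`, acting by `E_{kl} u_m = δ_{lm} u_k`. -/
def matUnit (n k l : ℕ) : Vsp n →ₗ[ℂ] Vsp n := (coordL n l).smulRight (uB n k)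

/-- The raising generator on `V`: `X_i = E_{i,i+1} − E_{n+i+1,n+i}` for `1 ≤ i ≤ n−1` and
`X_n = E_{n−1,2n} − E_{n,2n−1}`. -/
def XV (n i : ℕ) : Vsp n →ₗ[ℂ] Vsp n :=
  if i = n then matUnit n (n - 1) (2 * n) - matUnit n n (2 * n - 1)
  else matUnit n i (i + 1) - matUnit n (n + i + 1) (n + i)

/-- The lowering generator on `V`: `Y_i = E_{i+1,i} − E_{n+i,n+i+1}` for `1 ≤ i ≤ n−1` and
`Y_n = E_{2n−1,n} − E_{2n,n−1}`. -/
def YV (n i : ℕ) : Vsp n →ₗ[ℂ] Vsp n :=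
  if i = n then matUnit n (2 * n - 1) n - matUnit n (2 * n) (n - 1)
  else matUnit n (i + 1) i - matUnit n (n + i) (n + i + 1)

/-- `h_i(X)`: the eigenvalue of the coroot `H_i` on the weight vector `e_X`. -/
def hS (n i : ℕ) (X : Finset ℕ) : ℤ :=
  if i = n then (if n - 1 ∈ X then (1 : ℤ) else 0) + (if n ∈ X then (1 : ℤ) else 0) - 1
  else (if i ∈ X then (1 : ℤ) else 0) - (if i + 1 ∈ X then (1 : ℤ) else 0)

/-- The operator `K_i^{±1/2}` on `S`, acting on `e_X` by `q^{±h_i(X)/2}`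
(`ε = 1` gives `K_i^{1/2}`, `ε = −1` gives `K_i^{−1/2}`). -/
def Khalf (n : ℕ) (q : ℝ) (i : ℕ) (ε : ℤ) : Sp n →ₗ[ℂ] Sp n where
  toFun f := fun X => ((q ^ ((((ε * hS n i (X : Finset ℕ)) : ℤ) : ℝ) / 2) : ℝ) : ℂ) * f X
  map_add' f g := by funext X; simp [mul_add]
  map_smul' a f := by funext X; simp; ring

/-- `ẽ^q₁ = Σ_{(X′,X″)∈Ω₁} (−q)^{I₁(X′)} e_{X′} ⊗ e_{X″}`. -/
def e1tildeQ (n : ℕ) (q : ℝ) : Sp n ⊗[ℂ] Sp n :=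
  ∑ p ∈ Finset.univ.filter (fun p : SIdx n × SIdx n =>
      (p.1 : Finset ℕ) ∪ (p.2 : Finset ℕ) = Finset.Icc 1 n ∧
      (p.1 : Finset ℕ) ∩ (p.2 : Finset ℕ) = {1} ∧ Odd (p.1 : Finset ℕ).card),
    ((-(q : ℂ)) ^ (I1 n (p.1 : Finset ℕ))) • (eB n p.1 ⊗ₜ[ℂ] eB n p.2)

/-!
The raising operator `X_i` only sees the indices `D = {i, i + 1}` (resp. `{n - 1, n}` when
`i = n`): it sends `e_X` to `± e_{X ∆ D}` when `X ∩ D` is `{i + 1}` (resp. `∅`) and kills it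
otherwise. For `i ≥ 2` the index `1` is not in `D`, so `(X', X'') ↦ (X' ∆ D, X'' ∆ D)` is an
involution of `Ω₁`, and it matches each term of `(X_i ⊗ K_i^{-1/2}) ẽ^q₁` with one of
`(K_i^{1/2} ⊗ X_i) ẽ^q₁`. Both sides of the flip carry weight `h_i = 1` and `I₁` grows by one
along it, so the two terms cancel: `(-q)^{m+1} q^{-1/2} + (-q)^m q^{1/2} = 0`. For `i = 1` every
term vanishes, since `1` lies in both halves of every pair in `Ω₁`.
-/

open scoped symmDiff

section SymmDiffSum

variable {α β : Type*} [DecidableEq α] [AddCommMonoid β]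

lemma Finset.sum_symmDiff_add_two_nsmul_sum_inter (s t : Finset α) (f : α → β) :
    ∑ x ∈ s ∆ t, f x + 2 • ∑ x ∈ s ∩ t, f x = ∑ x ∈ s, f x + ∑ x ∈ t, f x := by
  rw [← Finset.sum_union_inter, symmDiff_eq_sup_sdiff_inf, two_nsmul, ← add_assoc]
  congr 1
  exact Finset.sum_sdiff Finset.inter_subset_union

lemma Finset.card_symmDiff_add_two_mul_card_inter (s t : Finset α) :
    (s ∆ t).card + 2 * (s ∩ t).card = s.card + t.card := by
  have h := Finset.sum_symmDiff_add_two_nsmul_sum_inter s t (fun _ => 1)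
  simpa only [← Finset.card_eq_sum_ones, smul_eq_mul] using h

end SymmDiffSum

section Cancellation

variable {R M ι : Type*} [CommRing R] [AddCommGroup M] [Module R M]

theorem map_add_map_sum_tmul_eq_zero_of_involutive (e : ι → M) (T Km Kp : M →ₗ[R] M)
    (Ω : Finset (ι × ι)) (φ : ι → ι) (hφ : Function.Involutive φ)
    (hΩ : ∀ p ∈ Ω, (φ p.1, φ p.2) ∈ Ω) (P : ι → Prop) [DecidablePred P]
    (σ κm κp : R) (c : ι → R) (hT : ∀ X, T (e X) = if P X then σ • e (φ X) else 0)
    (hP : ∀ p ∈ Ω, P p.2 ↔ P (φ p.1))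
    (hKm : ∀ X, P X → Km (e (φ X)) = κm • e (φ X))
    (hKp : ∀ X, P (φ X) → Kp (e X) = κp • e X)
    (hc : ∀ X, P (φ X) → c (φ X) * κm + c X * κp = 0) :
    (TensorProduct.map T Km + TensorProduct.map Kp T)
      (∑ p ∈ Ω, c p.1 • (e p.1 ⊗ₜ[R] e p.2)) = 0 := by
  simp only [map_sum, LinearMap.add_apply, map_smul, TensorProduct.map_tmul, smul_add,
    Finset.sum_add_distrib]
  have reindex : ∑ p ∈ Ω, c p.1 • (T (e p.1) ⊗ₜ[R] Km (e p.2)) =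
      ∑ p ∈ Ω, c (φ p.1) • (T (e (φ p.1)) ⊗ₜ[R] Km (e (φ p.2))) :=
    Finset.sum_nbij' (fun p => (φ p.1, φ p.2)) (fun p => (φ p.1, φ p.2)) hΩ hΩ
      (fun p _ => by simp [hφ _]) (fun p _ => by simp [hφ _]) (fun p _ => by simp [hφ _])
  rw [reindex, ← Finset.sum_add_distrib]
  refine Finset.sum_eq_zero fun p hp => ?_
  by_cases h : P p.2
  · have h1 : P (φ p.1) := (hP p hp).1 h
    rw [hT, if_pos h1, hφ, hT, if_pos h, hKm _ h, hKp _ h1]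
    simp only [TensorProduct.tmul_smul, ← TensorProduct.smul_tmul', smul_smul, ← add_smul]
    convert zero_smul R _
    linear_combination σ * hc _ h1
  · rw [hT p.2, if_neg h, hT, if_neg ((hP p hp).not.1 h)]
    simp

end Cancellation

section Spinor

variable {n : ℕ}

def symmDiffIdx (n : ℕ) (X : SIdx n) (D : Finset ℕ) (hD : D ⊆ Finset.Icc 1 n) : SIdx n :=
  ⟨(X : Finset ℕ) ∆ D, Finset.mem_powerset.2 <| Finset.symmDiff_subset_union.trans <|
    Finset.union_subset (Finset.mem_powerset.1 X.2) hD⟩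

@[simp]
lemma symmDiffIdx_symmDiffIdx (X : SIdx n) (D : Finset ℕ) (hD : D ⊆ Finset.Icc 1 n) :
    symmDiffIdx n (symmDiffIdx n X D hD) D hD = X :=
  Subtype.ext (symmDiff_symmDiff_cancel_right _ _)

lemma symmDiffIdx_involutive (D : Finset ℕ) (hD : D ⊆ Finset.Icc 1 n) :
    Function.Involutive (symmDiffIdx n · D hD) :=
  fun X => symmDiffIdx_symmDiffIdx X D hD

@[simp]
lemma coe_eraseIdx (X : SIdx n) (i : ℕ) :
    (eraseIdx n X i : Finset ℕ) = (X : Finset ℕ).erase i := rfl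

@[simp]
lemma coe_insertIdx (X : SIdx n) (i : ℕ) (h : i ∈ Finset.Icc 1 n) :
    (insertIdx n X i h : Finset ℕ) = insert i (X : Finset ℕ) := rfl

@[simp]
lemma coe_symmDiffIdx (X : SIdx n) (D : Finset ℕ) (hD : D ⊆ Finset.Icc 1 n) :
    (symmDiffIdx n X D hD : Finset ℕ) = (X : Finset ℕ) ∆ D := rfl

lemma mem_symmDiffIdx_iff_notMem {X : SIdx n} {D : Finset ℕ} (hD : D ⊆ Finset.Icc 1 n) {k : ℕ}
    (hk : k ∈ D) : k ∈ (symmDiffIdx n X D hD : Finset ℕ) ↔ k ∉ (X : Finset ℕ) := by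
  simp [Finset.mem_symmDiff, hk]

lemma eB_apply (X Y : SIdx n) : eB n X Y = if Y = X then 1 else 0 := by
  simp [eB, Pi.single_apply]

lemma adag_eB (i : ℕ) (X : SIdx n) :
    adag n i (eB n X) =
      if h : i ∈ Finset.Icc 1 n ∧ i ∉ (X : Finset ℕ) then
        (-1 : ℂ) ^ ((X : Finset ℕ).filter (· < i)).card • eB n (insertIdx n X i h.1)
      else 0 := by
  funext Y
  simp only [adag, eraseIdx, insertIdx, LinearMap.coe_mk, AddHom.coe_mk, dite_apply,
    Pi.smul_apply, Pi.zero_apply, smul_eq_mul, eB_apply, Subtype.ext_iff]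
  by_cases hY : (Y : Finset ℕ) = insert i (X : Finset ℕ) ∧ i ∉ (X : Finset ℕ)
  · obtain ⟨hY, hX⟩ := hY
    have hi : i ∈ Finset.Icc 1 n := Finset.mem_powerset.1 Y.2 (hY ▸ Finset.mem_insert_self _ _)
    simp [hY, hX, hi]
  · have hYX : ¬ (i ∈ (Y : Finset ℕ) ∧ (Y : Finset ℕ).erase i = X) := fun ⟨hi, hYX⟩ =>
      hY ⟨(Finset.erase_eq_iff_eq_insert hi (hYX ▸ Finset.notMem_erase _ _)).1 hYX,
        hYX ▸ Finset.notMem_erase _ _⟩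
    grind

lemma aop_eB (i : ℕ) (X : SIdx n) :
    aop n i (eB n X) =
      if i ∈ (X : Finset ℕ) then
        (-1 : ℂ) ^ ((X : Finset ℕ).filter (· < i)).card • eB n (eraseIdx n X i)
      else 0 := by
  funext Y
  simp only [aop, eraseIdx, insertIdx, LinearMap.coe_mk, AddHom.coe_mk, ite_apply,
    Pi.smul_apply, Pi.zero_apply, smul_eq_mul, eB_apply, Subtype.ext_iff]
  by_cases hY : i ∈ (X : Finset ℕ) ∧ (Y : Finset ℕ) = (X : Finset ℕ).erase i
  · obtain ⟨hX, hY⟩ := hY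
    have hi : i ∈ Finset.Icc 1 n := Finset.mem_powerset.1 X.2 hX
    simp [hY, hX, hi, Finset.insert_erase hX]
  · have hYX : ¬ (i ∉ (Y : Finset ℕ) ∧ insert i (Y : Finset ℕ) = X) := fun ⟨hi, hYX⟩ =>
      hY ⟨hYX ▸ Finset.mem_insert_self _ _, hYX ▸ (Finset.erase_insert hi).symm⟩
    grind

lemma card_filter_lt_succ_insert {X : Finset ℕ} {a : ℕ} (ha : a ∉ X) :
    ((insert a X).filter (· < a + 1)).card = (X.filter (· < a)).card + 1 := by
  rw [Finset.filter_insert, if_pos a.lt_succ_self,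
    Finset.card_insert_of_notMem (by simp [ha])]
  congr 2
  exact Finset.filter_congr fun k hk => by
    have : k ≠ a := ne_of_mem_of_not_mem hk ha
    omega

lemma neg_one_pow_mul_neg_one_pow_succ (m : ℕ) : (-1 : ℂ) ^ m * (-1) ^ (m + 1) = -1 := by
  rw [← pow_add, Odd.neg_one_pow ⟨m, by ring⟩]

lemma Xop_eB {i : ℕ} (hD : {i, i + 1} ⊆ Finset.Icc 1 n) (X : SIdx n) :
    Xop n i (eB n X) =
      if i ∉ (X : Finset ℕ) ∧ i + 1 ∈ (X : Finset ℕ) then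
        eB n (symmDiffIdx n X {i, i + 1} hD)
      else 0 := by
  have hi : i ∈ Finset.Icc 1 n := hD (Finset.mem_insert_self _ _)
  have hin : i ≠ n := by
    have := hD (by simp : i + 1 ∈ ({i, i + 1} : Finset ℕ))
    simp only [Finset.mem_Icc] at this
    omega
  rw [Xop, if_neg hin, LinearMap.neg_apply, LinearMap.comp_apply, adag_eB]
  by_cases hX : i ∉ (X : Finset ℕ)
  · rw [dif_pos ⟨hi, hX⟩, map_smul, aop_eB]
    by_cases hX1 : i + 1 ∈ (X : Finset ℕ)
    · rw [coe_insertIdx, if_pos (Finset.mem_insert_of_mem hX1), if_pos ⟨hX, hX1⟩, smul_smul,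
        card_filter_lt_succ_insert hX, neg_one_pow_mul_neg_one_pow_succ, neg_one_smul, neg_neg]
      congr 1
      ext k
      simp only [coe_eraseIdx, coe_insertIdx, coe_symmDiffIdx, Finset.mem_erase, Finset.mem_insert,
        Finset.mem_symmDiff, Finset.mem_singleton]
      grind
    · rw [if_neg (by simp [hX1]), if_neg (by tauto), smul_zero, neg_zero]
  · rw [dif_neg (by tauto), if_neg (by tauto), map_zero, neg_zero]

lemma Xop_self_eB (hD : {n - 1, n} ⊆ Finset.Icc 1 n) (X : SIdx n) :
    Xop n n (eB n X) =
      if n - 1 ∉ (X : Finset ℕ) ∧ n ∉ (X : Finset ℕ) then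
        -eB n (symmDiffIdx n X {n - 1, n} hD)
      else 0 := by
  have hn : 2 ≤ n := by
    have := hD (Finset.mem_insert_self _ _)
    simp only [Finset.mem_Icc] at this
    omega
  have hn1 : n - 1 ∈ Finset.Icc 1 n := hD (Finset.mem_insert_self _ _)
  rw [Xop, if_pos rfl, LinearMap.comp_apply, adag_eB]
  by_cases hX : n - 1 ∉ (X : Finset ℕ)
  · rw [dif_pos ⟨hn1, hX⟩, map_smul, adag_eB]
    by_cases hXn : n ∉ (X : Finset ℕ)
    · have hcard := card_filter_lt_succ_insert hX
      rw [Nat.sub_add_cancel (by omega)] at hcard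
      have hn' : n ∉ insert (n - 1) (X : Finset ℕ) := by
        simp only [Finset.mem_insert, hXn, or_false]
        omega
      rw [dif_pos ⟨Finset.mem_Icc.2 ⟨by omega, le_rfl⟩, hn'⟩, if_pos ⟨hX, hXn⟩, smul_smul]
      simp only [coe_insertIdx, hcard, neg_one_pow_mul_neg_one_pow_succ, neg_one_smul]
      congr 2
      ext k
      simp only [coe_insertIdx, coe_symmDiffIdx, Finset.mem_insert, Finset.mem_symmDiff,
        Finset.mem_singleton]
      grind
    · rw [dif_neg (by simp [hXn]), if_neg (by tauto), smul_zero]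
  · rw [dif_neg (by tauto), if_neg (by tauto), map_zero]

lemma Khalf_eB (q : ℝ) (i : ℕ) (ε : ℤ) (X : SIdx n) :
    Khalf n q i ε (eB n X) =
      ((q ^ (((ε * hS n i X : ℤ) : ℝ) / 2) : ℝ) : ℂ) • eB n X := by
  funext Y
  simp only [Khalf, LinearMap.coe_mk, AddHom.coe_mk, Pi.smul_apply, smul_eq_mul, eB_apply]
  split_ifs with h
  · rw [h]
  · simp

lemma I1_eq_sum (X : Finset ℕ) : I1 n X = ∑ k ∈ X, ((k : ℤ) - n) := by
  simp [I1, Finset.sum_sub_distrib]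

lemma I1_symmDiff_add (X D : Finset ℕ) :
    I1 n (X ∆ D) + 2 * ∑ k ∈ X ∩ D, ((k : ℤ) - n) =
      I1 n X + ∑ k ∈ D, ((k : ℤ) - n) := by
  simpa [I1_eq_sum] using Finset.sum_symmDiff_add_two_nsmul_sum_inter X D (fun k => (k : ℤ) - n)

lemma I1_symmDiff_pair {X : Finset ℕ} {a : ℕ} (ha : a ∈ X) (ha1 : a + 1 ∉ X) :
    I1 n (X ∆ {a, a + 1}) = I1 n X + 1 := by
  have h := I1_symmDiff_add (n := n) X {a, a + 1}
  rw [Finset.inter_insert_of_mem ha, Finset.inter_singleton_of_notMem ha1,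
    Finset.sum_pair (by omega)] at h
  simp at h
  linarith

lemma I1_symmDiff_of_pair_subset {X : Finset ℕ} (hn : 1 ≤ n) (hX : {n - 1, n} ⊆ X) :
    I1 n (X ∆ {n - 1, n}) = I1 n X + 1 := by
  have h := I1_symmDiff_add (n := n) X {n - 1, n}
  rw [Finset.inter_eq_right.2 hX, Finset.sum_pair (by omega)] at h
  push_cast [hn] at h
  linarith

lemma neg_zpow_succ_mul_rpow_add (q : ℝ) (hq : 0 < q) (m : ℤ) :
    (-(q : ℂ)) ^ (m + 1) * ((q ^ (-1 / 2 : ℝ) : ℝ) : ℂ) +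
      (-(q : ℂ)) ^ m * ((q ^ (1 / 2 : ℝ) : ℝ) : ℂ) = 0 := by
  have hhalf : q ^ (1 / 2 : ℝ) = q * q ^ (-1 / 2 : ℝ) := by
    rw [← Real.rpow_one_add' hq.le (by norm_num)]
    norm_num
  have hq0 : (-(q : ℂ)) ≠ 0 := by simp [hq.ne']
  rw [hhalf, zpow_add₀ hq0, zpow_one]
  push_cast
  ring

def omega1 (n : ℕ) : Finset (SIdx n × SIdx n) :=
  Finset.univ.filter fun p : SIdx n × SIdx n =>
    (p.1 : Finset ℕ) ∪ (p.2 : Finset ℕ) = Finset.Icc 1 n ∧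
      (p.1 : Finset ℕ) ∩ (p.2 : Finset ℕ) = {1} ∧ Odd (p.1 : Finset ℕ).card

lemma e1tildeQ_eq_sum (q : ℝ) :
    e1tildeQ n q =
      ∑ p ∈ omega1 n, (-(q : ℂ)) ^ I1 n (p.1 : Finset ℕ) • (eB n p.1 ⊗ₜ eB n p.2) :=
  rfl

lemma mem_fst_iff_notMem_snd {p : SIdx n × SIdx n} (hp : p ∈ omega1 n) {k : ℕ}
    (hk : k ∈ Finset.Icc 1 n) (hk1 : k ≠ 1) :
    k ∈ (p.1 : Finset ℕ) ↔ k ∉ (p.2 : Finset ℕ) := by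
  obtain ⟨-, hu, hI, -⟩ := Finset.mem_filter.1 hp
  have hcover := (Finset.ext_iff.1 hu k).2 hk
  have hdisj := Finset.ext_iff.1 hI k
  simp only [Finset.mem_union, Finset.mem_inter, Finset.mem_singleton, hk1, iff_false]
    at hcover hdisj
  tauto

lemma mem_symmDiffIdx_fst_iff {p : SIdx n × SIdx n} (hp : p ∈ omega1 n) {D : Finset ℕ}
    (hD : D ⊆ Finset.Icc 1 n) (hD1 : 1 ∉ D) {k : ℕ} (hk : k ∈ D) :
    k ∈ (symmDiffIdx n p.1 D hD : Finset ℕ) ↔ k ∈ (p.2 : Finset ℕ) := by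
  rw [mem_symmDiffIdx_iff_notMem hD hk, mem_fst_iff_notMem_snd hp (hD hk)
    (ne_of_mem_of_not_mem hk hD1), not_not]

lemma symmDiffIdx_mem_omega1 {D : Finset ℕ} (hD : D ⊆ Finset.Icc 1 n) (hD1 : 1 ∉ D)
    (hD2 : Even D.card) {p : SIdx n × SIdx n} (hp : p ∈ omega1 n) :
    (symmDiffIdx n p.1 D hD, symmDiffIdx n p.2 D hD) ∈ omega1 n := by
  have hsplit : ∀ k ∈ D, k ∈ (p.1 : Finset ℕ) ↔ k ∉ (p.2 : Finset ℕ) := fun k hk =>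
    mem_fst_iff_notMem_snd hp (hD hk) (ne_of_mem_of_not_mem hk hD1)
  obtain ⟨-, hu, hI, hodd⟩ := Finset.mem_filter.1 hp
  refine Finset.mem_filter.2 ⟨Finset.mem_univ _, ?_, ?_, ?_⟩
  · ext k
    have hk := Finset.ext_iff.1 hu k
    have hkD := @hD k
    simp only [coe_symmDiffIdx, Finset.mem_union, Finset.mem_symmDiff] at hk ⊢
    grind
  · ext k
    have hk := Finset.ext_iff.1 hI k
    have hkD := hsplit k
    simp only [coe_symmDiffIdx, Finset.mem_inter, Finset.mem_symmDiff, Finset.mem_singleton]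
      at hk ⊢
    grind
  · have hcard := Finset.card_symmDiff_add_two_mul_card_inter (p.1 : Finset ℕ) D
    rw [coe_symmDiffIdx, Nat.odd_iff]
    rw [Nat.odd_iff] at hodd
    rw [Nat.even_iff] at hD2
    omega

lemma one_mem_of_mem_omega1 {p : SIdx n × SIdx n} (hp : p ∈ omega1 n) :
    1 ∈ (p.1 : Finset ℕ) ∧ 1 ∈ (p.2 : Finset ℕ) := by
  obtain ⟨-, -, hI, -⟩ := Finset.mem_filter.1 hp
  exact Finset.mem_inter.1 (hI ▸ Finset.mem_singleton_self 1)

def deltaXop (n : ℕ) (q : ℝ) (i : ℕ) : Sp n ⊗[ℂ] Sp n →ₗ[ℂ] Sp n ⊗[ℂ] Sp n :=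
  TensorProduct.map (Xop n i) (Khalf n q i (-1)) + TensorProduct.map (Khalf n q i 1) (Xop n i)

lemma deltaXop_one_e1tildeQ (hn : 2 ≤ n) (q : ℝ) : deltaXop n q 1 (e1tildeQ n q) = 0 := by
  have hD : ({1, 1 + 1} : Finset ℕ) ⊆ Finset.Icc 1 n := by
    intro k
    simp only [Finset.mem_insert, Finset.mem_singleton, Finset.mem_Icc]
    omega
  have hXop : ∀ X : SIdx n, 1 ∈ (X : Finset ℕ) → Xop n 1 (eB n X) = 0 := fun X hX => by
    rw [Xop_eB hD, if_neg (not_and_of_not_left _ (not_not.2 hX))]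
  rw [e1tildeQ_eq_sum, map_sum]
  refine Finset.sum_eq_zero fun p hp => ?_
  obtain ⟨h1, h2⟩ := one_mem_of_mem_omega1 hp
  simp [deltaXop, hXop _ h1, hXop _ h2]

lemma deltaXop_e1tildeQ_of_symmDiff {i : ℕ} (q : ℝ) (hq : 0 < q) {D : Finset ℕ}
    (hD : D ⊆ Finset.Icc 1 n) (hD1 : 1 ∉ D) (hD2 : Even D.card) (P : SIdx n → Prop)
    [DecidablePred P] (σ : ℂ)
    (hT : ∀ X, Xop n i (eB n X) = if P X then σ • eB n (symmDiffIdx n X D hD) else 0)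
    (hP : ∀ p ∈ omega1 n, P p.2 ↔ P (symmDiffIdx n p.1 D hD))
    (hweight : ∀ X, P (symmDiffIdx n X D hD) →
      hS n i X = 1 ∧ I1 n (symmDiffIdx n X D hD) = I1 n X + 1) :
    deltaXop n q i (e1tildeQ n q) = 0 := by
  rw [e1tildeQ_eq_sum]
  refine map_add_map_sum_tmul_eq_zero_of_involutive (eB n) _ _ _ (omega1 n)
    (symmDiffIdx n · D hD) (symmDiffIdx_involutive D hD)
    (fun p hp => symmDiffIdx_mem_omega1 hD hD1 hD2 hp) P σ
    ((q ^ (-1 / 2 : ℝ) : ℝ) : ℂ) ((q ^ (1 / 2 : ℝ) : ℝ) : ℂ)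
    (fun X : SIdx n => (-(q : ℂ)) ^ I1 n (X : Finset ℕ)) hT hP ?_ ?_ ?_
  · intro X hX
    rw [Khalf_eB, (hweight _ (by rwa [symmDiffIdx_symmDiffIdx])).1]
    norm_num
  · intro X hX
    rw [Khalf_eB, (hweight X hX).1]
    norm_num
  · intro X hX
    rw [(hweight X hX).2]
    exact neg_zpow_succ_mul_rpow_add q hq _

lemma deltaXop_e1tildeQ_of_lt {i : ℕ} (hi : 2 ≤ i) (hin : i < n) (q : ℝ) (hq : 0 < q) :
    deltaXop n q i (e1tildeQ n q) = 0 := by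
  have hD : ({i, i + 1} : Finset ℕ) ⊆ Finset.Icc 1 n := by
    intro k
    simp only [Finset.mem_insert, Finset.mem_singleton, Finset.mem_Icc]
    omega
  have hD1 : 1 ∉ ({i, i + 1} : Finset ℕ) := by
    simp only [Finset.mem_insert, Finset.mem_singleton]
    omega
  have hi0 : i ∈ ({i, i + 1} : Finset ℕ) := by simp
  have hi1 : i + 1 ∈ ({i, i + 1} : Finset ℕ) := by simp
  refine deltaXop_e1tildeQ_of_symmDiff q hq hD hD1 (by simp)
    (fun X => i ∉ (X : Finset ℕ) ∧ i + 1 ∈ (X : Finset ℕ)) 1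
    (fun X => by rw [Xop_eB hD, one_smul])
    (fun p hp => by
      simp only [mem_symmDiffIdx_fst_iff hp hD hD1 hi0, mem_symmDiffIdx_fst_iff hp hD hD1 hi1])
    ?_
  rintro X ⟨h1, h2⟩
  rw [mem_symmDiffIdx_iff_notMem hD hi0, not_not] at h1
  rw [mem_symmDiffIdx_iff_notMem hD hi1] at h2
  exact ⟨by simp [hS, hin.ne, h1, h2], I1_symmDiff_pair h1 h2⟩

lemma deltaXop_self_e1tildeQ (hn : 3 ≤ n) (q : ℝ) (hq : 0 < q) :
    deltaXop n q n (e1tildeQ n q) = 0 := by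
  have hD : ({n - 1, n} : Finset ℕ) ⊆ Finset.Icc 1 n := by
    intro k
    simp only [Finset.mem_insert, Finset.mem_singleton, Finset.mem_Icc]
    omega
  have hD1 : 1 ∉ ({n - 1, n} : Finset ℕ) := by
    simp only [Finset.mem_insert, Finset.mem_singleton]
    omega
  have hn0 : n - 1 ∈ ({n - 1, n} : Finset ℕ) := by simp
  have hn1 : n ∈ ({n - 1, n} : Finset ℕ) := by simp
  refine deltaXop_e1tildeQ_of_symmDiff q hq hD hD1
    (by rw [Finset.card_pair (by omega)]; decide)
    (fun X => n - 1 ∉ (X : Finset ℕ) ∧ n ∉ (X : Finset ℕ)) (-1)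
    (fun X => by rw [Xop_self_eB hD, neg_one_smul])
    (fun p hp => by
      simp only [mem_symmDiffIdx_fst_iff hp hD hD1 hn0, mem_symmDiffIdx_fst_iff hp hD hD1 hn1])
    ?_
  rintro X ⟨h1, h2⟩
  rw [mem_symmDiffIdx_iff_notMem hD hn0, not_not] at h1
  rw [mem_symmDiffIdx_iff_notMem hD hn1, not_not] at h2
  exact ⟨by simp [hS, h1, h2],
    I1_symmDiff_of_pair_subset (by omega)
      (Finset.insert_subset h1 (Finset.singleton_subset_iff.2 h2))⟩

end Spinor

theorem stmt13_general (n : ℕ) (hn : 3 ≤ n) (q : ℝ) (hq : 0 < q)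
    (i : ℕ) (hi : i ∈ Finset.Icc 1 n) :
    (TensorProduct.map (Xop n i) (Khalf n q i (-1))
        + TensorProduct.map (Khalf n q i 1) (Xop n i)) (e1tildeQ n q) = 0 := by
  change deltaXop n q i (e1tildeQ n q) = 0
  obtain ⟨hi1, hin⟩ := Finset.mem_Icc.1 hi
  obtain rfl | ⟨hi2, hlt⟩ | rfl : i = 1 ∨ (2 ≤ i ∧ i < n) ∨ i = n := by omega
  · exact deltaXop_one_e1tildeQ (by omega) q
  · exact deltaXop_e1tildeQ_of_lt hi2 hlt q hq
  · exact deltaXop_self_e1tildeQ hn q hq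

/-- `ẽ^q₁` is annihilated by `X_i ⊗ K_i^{−1/2} + K_i^{1/2} ⊗ X_i` for every `i ∈ {1,…,n}`:
it is a highest weight vector of weight `L₁` for the `U_q(so_{2n})`-action on `U₊ ⊗ U₊`. -/
theorem stmt13 (n : ℕ) (hn : 3 ≤ n) (hodd : Odd n) (q : ℝ) (hq : 0 < q)
    (i : ℕ) (hi : i ∈ Finset.Icc 1 n) :
    (TensorProduct.map (Xop n i) (Khalf n q i (-1))
        + TensorProduct.map (Khalf n q i 1) (Xop n i)) (e1tildeQ n q) = 0 :=
  stmt13_general n hn q hq i hi
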